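/- Let q = 2^m with m ≥ 4 even, and let C be a binary linear code of length 2^m and dimension 2m+1 with weight distribution: weight 0 once, 2^(m−1)−2^(m/2) with multiplicity (2^m−1)·2^(m−2)/3, 2^(m−1)−2^((m−2)/2) with multiplicity (2^m−1)·2^(m+1)/3, 2^(m−1) with multiplicity 2(2^m−1)(2^(m−2)+1), 2^(m−1)+2^((m−2)/2) with multiplicity (2^m−1)·2^(m+1)/3, 2^(m−1)+2^(m/2) with multiplicity (2^m−1)·2^(m−2)/3, and 2^m once. Then the number of weight-6 codewords of the dual code is A₆(C⊥) = (1/45)·2^(m−4)·(2^m−4)²·(2^m−1). -/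

import Mathlib

/-!
The argument is the sixth Pless power moment, i.e. a MacWilliams identity read off at one
coefficient. For a binary code `D` and a word `v`, the character sum `∑_{c ∈ D} (-1)^{v·c}` is
`|D|` when `v ∈ D⊥` and `0` otherwise; and for fixed `c` the generating function
`∑_v (-1)^{v·c} X^{wt v}` factors over the coordinates as `(1 - X)^{wt c} (1 + X)^{n - wt c}`,
whose coefficient of `X^j` is the Krawtchouk value `K_j(wt c)`. Summing over `c ∈ D` gives
`|D| · A_j(D⊥) = ∑_{c ∈ D} K_j(wt c)`.

For `m = 2k` put `a = 2^(k-1)`: then `n = 4a²`, `|C| = 32a⁴`, and the seven weights are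
`0, 2a² ± 2a, 2a² ± a, 2a², 4a²`. With the given multiplicities the right-hand side for `j = 6`
is a polynomial in `a`, and the claimed value of `A₆(C⊥)` is a polynomial identity in `ℚ[a]`.
-/

open Finset

/-- Hamming weight of a word. -/
noncomputable def wt {K : Type*} [Field K] {ι : Type*} [Fintype ι] (c : ι → K) : ℕ :=
  Nat.card {i : ι // c i ≠ 0}

/-- The linear functional `v ↦ ∑ i, v i * c i`. -/
noncomputable def dotL {K : Type*} [Field K] {ι : Type*} [Fintype ι] (c : ι → K) :
    (ι → K) →ₗ[K] K where
  toFun v := ∑ i, v i * c i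
  map_add' u v := by simp [add_mul, Finset.sum_add_distrib]
  map_smul' r v := by simp [Finset.mul_sum, mul_assoc]

/-- The dual code of a linear code. -/
noncomputable def dualCode {K : Type*} [Field K] {ι : Type*} [Fintype ι]
    (C : Submodule K (ι → K)) : Submodule K (ι → K) :=
  ⨅ c ∈ C, LinearMap.ker (dotL c)

/-- The punctured code of `C` on `T`. -/
noncomputable def punctureCode {K : Type*} [Field K] {ι : Type*}
    (C : Submodule K (ι → K)) (T : Finset ι) :
    Submodule K ({i : ι // i ∉ T} → K) :=
  C.map (LinearMap.funLeft K K Subtype.val)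

/-- The shortened code of `C` on `T`. -/
noncomputable def shortenCode {K : Type*} [Field K] {ι : Type*}
    (C : Submodule K (ι → K)) (T : Finset ι) :
    Submodule K ({i : ι // i ∉ T} → K) :=
  (C ⊓ ⨅ i ∈ T, LinearMap.ker (LinearMap.proj i)).map
    (LinearMap.funLeft K K Subtype.val)

/-- The number of codewords of weight `w` in a code. -/
noncomputable def numwt {K : Type*} [Field K] {ι : Type*} [Fintype ι]
    (C : Submodule K (ι → K)) (w : ℕ) : ℕ :=
  Nat.card {c : C // wt (c : ι → K) = w}

open Polynomial
open scoped Nat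

/-- `K_j(x; n)`, written with `Ring.choose` so that it is a polynomial in `n` and `x`: the final
computation evaluates it at rational arguments such as `2a² - 2a`. -/
def krawtchouk {R : Type*} [CommRing R] [BinomialRing R] (n : R) (j : ℕ) (x : R) : R :=
  ∑ i ∈ range (j + 1), (-1) ^ i * Ring.choose x i * Ring.choose (n - x) (j - i)

theorem krawtchouk_natCast {R : Type*} [CommRing R] [BinomialRing R] [NatPowAssoc R]
    {n w : ℕ} (h : w ≤ n) (j : ℕ) :
    krawtchouk (n : R) j (w : R) =
      ∑ i ∈ range (j + 1), (-1) ^ i * (w.choose i : R) * ((n - w).choose (j - i) : R) := by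
  simp only [krawtchouk, ← Nat.cast_sub h, Ring.choose_natCast]

theorem Ring.choose_eq_descPochhammer_eval_div {K : Type*} [Field K] [CharZero K] (x : K)
    (k : ℕ) : Ring.choose x k = (descPochhammer K k).eval x / k ! := by
  rw [Ring.choose_eq_smul, ← aeval_eq_smeval, ← descPochhammer_map (algebraMap ℤ K),
    eval_map_algebraMap, div_eq_inv_mul, smul_eq_mul]

theorem coeff_one_sub_X_pow {R : Type*} [CommRing R] (n k : ℕ) :
    ((1 - X : R[X]) ^ n).coeff k = (-1) ^ k * (n.choose k : R) := by
  rw [sub_eq_add_neg, add_comm, add_pow, finsetSum_coeff]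
  have (b : ℕ) : ((-X : R[X]) ^ b * 1 ^ (n - b) * (n.choose b : R[X])) =
      C ((-1) ^ b * (n.choose b : R)) * X ^ b := by
    rw [neg_pow, one_pow, mul_one, C_mul, C_pow, C_neg, C_1, map_natCast]; ring
  simp_rw [this, coeff_C_mul_X_pow]
  rw [Finset.sum_ite_eq]
  split_ifs with hk
  · rfl
  · rw [Nat.choose_eq_zero_of_lt (by simpa using hk)]; simp

theorem coeff_one_sub_X_pow_mul_one_add_X_pow {R : Type*} [CommRing R] [BinomialRing R]
    [NatPowAssoc R] {n w : ℕ} (h : w ≤ n) (j : ℕ) :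
    ((1 - X : R[X]) ^ w * (1 + X) ^ (n - w)).coeff j = krawtchouk (n : R) j (w : R) := by
  rw [krawtchouk_natCast h, coeff_mul, Finset.Nat.sum_antidiagonal_eq_sum_range_succ_mk]
  simp only [coeff_one_sub_X_pow, coeff_one_add_X_pow]

def signChar : AddChar (ZMod 2) ℚ := AddChar.zmodChar 2 (by norm_num : (-1 : ℚ) ^ 2 = 1)

theorem signChar_one : signChar 1 = -1 := by
  simp [signChar, AddChar.zmodChar_apply, ZMod.val_one]

theorem ZMod.eq_zero_or_eq_one (x : ZMod 2) : x = 0 ∨ x = 1 := by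
  revert x
  decide

theorem signChar_injective : Function.Injective signChar := by
  intro a b h
  rcases ZMod.eq_zero_or_eq_one a with rfl | rfl <;>
    rcases ZMod.eq_zero_or_eq_one b with rfl | rfl <;>
    first | rfl | norm_num [signChar_one] at h

theorem AddChar.map_sum_eq_prod {A M ι : Type*} [AddCommMonoid A] [CommMonoid M]
    (ψ : AddChar A M) (s : Finset ι) (f : ι → A) : ψ (∑ i ∈ s, f i) = ∏ i ∈ s, ψ (f i) := by
  classical
  induction s using Finset.induction_on with
  | empty => simp
  | insert a s ha ih => rw [sum_insert ha, prod_insert ha, AddChar.map_add_eq_mul, ih]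

section Weight

variable {K ι : Type*} [Field K] [Fintype ι]

theorem wt_eq_card_filter [DecidableEq K] (c : ι → K) : wt c = #{i | c i ≠ 0} := by
  rw [wt, Nat.card_eq_fintype_card, Fintype.card_subtype]

theorem wt_le_card (c : ι → K) : wt c ≤ Fintype.card ι := by
  classical
  exact wt_eq_card_filter c ▸ card_filter_le _ _

theorem wt_eq_zero_iff {c : ι → K} : wt c = 0 ↔ c = 0 := by
  classical
  simp [wt_eq_card_filter, filter_eq_empty_iff, funext_iff]

theorem numwt_eq_card_filter [Fintype K] [DecidableEq ι] (D : Submodule K (ι → K))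
    [DecidablePred (· ∈ D)] (w : ℕ) : numwt D w = #{v | v ∈ D ∧ wt v = w} := by
  rw [numwt, Nat.card_congr (Equiv.subtypeSubtypeEquivSubtypeInter (· ∈ D) (wt · = w)),
    Nat.card_eq_fintype_card, Fintype.card_subtype]

theorem numwt_zero (D : Submodule K (ι → K)) : numwt D 0 = 1 := by
  rw [numwt, Nat.card_eq_one_iff_unique]
  exact ⟨⟨fun c d => Subtype.ext <| Subtype.ext <|
    (wt_eq_zero_iff.mp c.2).trans (wt_eq_zero_iff.mp d.2).symm⟩, ⟨⟨0, wt_eq_zero_iff.mpr rfl⟩⟩⟩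

theorem sum_wt_eq_sum_numwt_smul {M : Type*} [AddCommMonoid M] (D : Submodule K (ι → K))
    [Fintype D] {S : Finset ℕ} (hS : ∀ w ∉ S, numwt D w = 0) (f : ℕ → M) :
    ∑ c : D, f (wt (c : ι → K)) = ∑ w ∈ S, numwt D w • f w := by
  classical
  have hmaps (c : D) : wt (c : ι → K) ∈ S := by
    by_contra hc
    have : 0 < numwt D (wt (c : ι → K)) := Nat.card_pos_iff.mpr ⟨⟨⟨c, rfl⟩⟩, inferInstance⟩
    exact this.ne' (hS _ hc)
  rw [← sum_fiberwise_of_maps_to (fun c _ => hmaps c)]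
  refine sum_congr rfl fun w _ => ?_
  rw [sum_congr rfl fun c hc => congrArg f (mem_filter.mp hc).2, sum_const, numwt,
    Nat.card_eq_fintype_card, Fintype.card_subtype]

end Weight

section Binary

variable {ι : Type*} [Fintype ι]

theorem sum_signChar_mul_X_pow (x : ZMod 2) :
    ∑ a : ZMod 2, C (signChar (a * x)) * X ^ (if a = 0 then 0 else 1) =
      if x = 0 then (1 + X : ℚ[X]) else 1 - X := by
  rw [show (univ : Finset (ZMod 2)) = {0, 1} by decide, sum_pair zero_ne_one]
  rcases ZMod.eq_zero_or_eq_one x with rfl | rfl <;> simp [signChar_one, sub_eq_add_neg]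

theorem sum_signChar_dotL_mul_X_pow_wt [DecidableEq ι] (c : ι → ZMod 2) :
    ∑ v : ι → ZMod 2, C (signChar (dotL c v)) * X ^ wt v =
      (1 - X : ℚ[X]) ^ wt c * (1 + X) ^ (Fintype.card ι - wt c) := by
  have hterm (v : ι → ZMod 2) : C (signChar (dotL c v)) * X ^ wt v =
      ∏ i, C (signChar (v i * c i)) * X ^ (if v i = 0 then 0 else 1) := by
    rw [prod_mul_distrib, ← map_prod, ← AddChar.map_sum_eq_prod, prod_pow_eq_pow_sum,
      wt_eq_card_filter, card_filter]
    simp only [dotL, LinearMap.coe_mk, AddHom.coe_mk, ite_not]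
  have hcard : #{i | c i = 0} = Fintype.card ι - wt c := by
    have := card_filter_add_card_filter_not (s := univ) (fun i => c i = 0)
    rw [Finset.card_univ] at this
    simp only [wt_eq_card_filter, ne_eq] at this ⊢
    omega
  simp_rw [hterm]
  rw [← Fintype.prod_sum fun i (a : ZMod 2) =>
    C (signChar (a * c i)) * X ^ (if a = 0 then 0 else 1)]
  simp_rw [sum_signChar_mul_X_pow]
  rw [prod_ite, prod_const, prod_const, hcard, wt_eq_card_filter, mul_comm]

theorem sum_signChar_dotL_of_wt_eq [DecidableEq ι] (c : ι → ZMod 2) (j : ℕ) :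
    ∑ v with wt v = j, signChar (dotL c v) = krawtchouk (Fintype.card ι : ℚ) j (wt c) := by
  have h := congrArg (coeff · j) (sum_signChar_dotL_mul_X_pow_wt c)
  simp only [finsetSum_coeff, coeff_C_mul_X_pow] at h
  rw [← coeff_one_sub_X_pow_mul_one_add_X_pow (wt_le_card c), ← h, sum_filter]
  simp_rw [eq_comm (a := j)]

theorem mem_dualCode_iff (D : Submodule (ZMod 2) (ι → ZMod 2)) (v : ι → ZMod 2) :
    v ∈ dualCode D ↔ ∀ c ∈ D, dotL c v = 0 := by
  simp [dualCode, Submodule.mem_iInf]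

theorem sum_signChar_dotL_eq_ite (D : Submodule (ZMod 2) (ι → ZMod 2)) [Fintype D]
    (v : ι → ZMod 2) [Decidable (v ∈ dualCode D)] :
    ∑ c : D, signChar (dotL c v) = if v ∈ dualCode D then (Fintype.card D : ℚ) else 0 := by
  classical
  let ψ : AddChar D ℚ :=
    signChar.compAddMonoidHom ((dotL v).comp D.subtype).toAddMonoidHom
  have hψ (c : D) : ψ c = signChar (dotL c v) := by
    simp only [ψ, AddChar.compAddMonoidHom_apply, LinearMap.toAddMonoidHom_coe,
      LinearMap.coe_comp, Function.comp_apply, Submodule.coe_subtype, dotL, LinearMap.coe_mk,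
      AddHom.coe_mk, mul_comm]
  have hψ_zero : ψ = 0 ↔ v ∈ dualCode D := by
    rw [AddChar.eq_zero_iff, mem_dualCode_iff, Subtype.forall]
    simp only [hψ, ← AddChar.map_zero_eq_one signChar, signChar_injective.eq_iff]
  simp_rw [← hψ, AddChar.sum_eq_ite ψ, hψ_zero]

theorem card_mul_numwt_dualCode (D : Submodule (ZMod 2) (ι → ZMod 2))
    [Fintype D] (j : ℕ) :
    (Fintype.card D : ℚ) * numwt (dualCode D) j =
      ∑ c : D, krawtchouk (Fintype.card ι : ℚ) j (wt (c : ι → ZMod 2)) := by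
  classical
  simp_rw [← sum_signChar_dotL_of_wt_eq]
  rw [sum_comm]
  simp_rw [sum_signChar_dotL_eq_ite, ← sum_filter, sum_const, numwt_eq_card_filter,
    filter_filter, and_comm, nsmul_eq_mul, mul_comm]

end Binary

-- `∑_w A_w K₆(w) = |C| A₆(C⊥)` for the Gold weight distribution, with `n = 4a²` and `|C| = 32a⁴`.
theorem krawtchouk_six_goldWeights (a : ℚ) :
    krawtchouk (4 * a ^ 2) 6 0
      + (4 * a ^ 2 - 1) * a ^ 2 / 3 *
        (krawtchouk (4 * a ^ 2) 6 (2 * a ^ 2 - 2 * a) +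
          krawtchouk (4 * a ^ 2) 6 (2 * a ^ 2 + 2 * a))
      + (4 * a ^ 2 - 1) * (8 * a ^ 2) / 3 *
        (krawtchouk (4 * a ^ 2) 6 (2 * a ^ 2 - a) + krawtchouk (4 * a ^ 2) 6 (2 * a ^ 2 + a))
      + 2 * (4 * a ^ 2 - 1) * (a ^ 2 + 1) * krawtchouk (4 * a ^ 2) 6 (2 * a ^ 2)
      + krawtchouk (4 * a ^ 2) 6 (4 * a ^ 2)
      = 32 * a ^ 4 * (1 / 45 * (a ^ 2 / 4) * (4 * a ^ 2 - 4) ^ 2 * (4 * a ^ 2 - 1)) := by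
  simp only [krawtchouk, Ring.choose_eq_descPochhammer_eval_div, descPochhammer_eval_eq_prod_range,
    Finset.sum_range_succ, Finset.prod_range_succ, Finset.sum_range_zero, Finset.prod_range_zero]
  norm_num [Nat.factorial]
  ring

theorem numwt_dualCode_six_of_goldWeights {ι : Type*} [Fintype ι]
    (C : Submodule (ZMod 2) (ι → ZMod 2)) [Fintype C] {a : ℕ} (ha : 2 ≤ a)
    (hι : Fintype.card ι = 4 * a ^ 2) (hC : Fintype.card C = 32 * a ^ 4)
    (h0 : ∀ w ∉ [0, 2 * a ^ 2 - 2 * a, 2 * a ^ 2 - a, 2 * a ^ 2, 2 * a ^ 2 + a,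
      2 * a ^ 2 + 2 * a, 4 * a ^ 2], numwt C w = 0)
    (h1 : (numwt C (2 * a ^ 2 - 2 * a) : ℚ) = (4 * a ^ 2 - 1) * a ^ 2 / 3)
    (h2 : (numwt C (2 * a ^ 2 - a) : ℚ) = (4 * a ^ 2 - 1) * (8 * a ^ 2) / 3)
    (h3 : (numwt C (2 * a ^ 2) : ℚ) = 2 * (4 * a ^ 2 - 1) * (a ^ 2 + 1))
    (h4 : (numwt C (2 * a ^ 2 + a) : ℚ) = (4 * a ^ 2 - 1) * (8 * a ^ 2) / 3)
    (h5 : (numwt C (2 * a ^ 2 + 2 * a) : ℚ) = (4 * a ^ 2 - 1) * a ^ 2 / 3)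
    (h6 : numwt C (4 * a ^ 2) = 1) :
    (numwt (dualCode C) 6 : ℚ) = 1 / 45 * (a ^ 2 / 4) * (4 * a ^ 2 - 4) ^ 2 * (4 * a ^ 2 - 1) := by
  classical
  have ha2 : 2 * a ≤ a ^ 2 := by nlinarith
  have hnodup : [0, 2 * a ^ 2 - 2 * a, 2 * a ^ 2 - a, 2 * a ^ 2, 2 * a ^ 2 + a,
      2 * a ^ 2 + 2 * a, 4 * a ^ 2].Nodup := by
    refine (List.sortedLT_iff_isChain.mpr ?_).nodup
    simp only [List.isChain_cons_cons, List.isChain_singleton, and_true]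
    omega
  have hmoment := card_mul_numwt_dualCode C 6
  rw [sum_wt_eq_sum_numwt_smul C (S := List.toFinset _)
      (fun w hw => h0 w (List.mem_toFinset.not.mp hw)) fun w => krawtchouk (Fintype.card ι : ℚ) 6 w,
    List.sum_toFinset _ hnodup] at hmoment
  simp only [List.map_cons, List.map_nil, List.sum_cons, List.sum_nil, nsmul_eq_mul, numwt_zero,
    h6, hι, hC, h1, h2, h3, h4, h5] at hmoment
  push_cast [Nat.cast_sub (by omega : 2 * a ≤ 2 * a ^ 2), Nat.cast_sub (by omega : a ≤ 2 * a ^ 2)]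
    at hmoment
  refine mul_left_cancel₀ (by positivity : (32 * a ^ 4 : ℚ) ≠ 0) ?_
  rw [hmoment, ← krawtchouk_six_goldWeights]
  ring

theorem stmt_14 (m : ℕ) (hm : 4 ≤ m) (hmeven : Even m)
    (C : Submodule (ZMod 2) (Fin (2 ^ m) → ZMod 2))
    (hdim : Module.finrank (ZMod 2) C = 2 * m + 1)
    (h1 : (numwt C (2 ^ (m - 1) - 2 ^ (m / 2)) : ℚ) = (2 ^ m - 1) * 2 ^ (m - 2) / 3)
    (h2 : (numwt C (2 ^ (m - 1) - 2 ^ ((m - 2) / 2)) : ℚ) =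
      (2 ^ m - 1) * 2 ^ (m + 1) / 3)
    (h3 : numwt C (2 ^ (m - 1)) = 2 * (2 ^ m - 1) * (2 ^ (m - 2) + 1))
    (h4 : (numwt C (2 ^ (m - 1) + 2 ^ ((m - 2) / 2)) : ℚ) =
      (2 ^ m - 1) * 2 ^ (m + 1) / 3)
    (h5 : (numwt C (2 ^ (m - 1) + 2 ^ (m / 2)) : ℚ) = (2 ^ m - 1) * 2 ^ (m - 2) / 3)
    (h6 : numwt C (2 ^ m) = 1)
    (h0 : ∀ w : ℕ, w ≠ 0 → w ≠ 2 ^ (m - 1) - 2 ^ (m / 2) →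
      w ≠ 2 ^ (m - 1) - 2 ^ ((m - 2) / 2) → w ≠ 2 ^ (m - 1) →
      w ≠ 2 ^ (m - 1) + 2 ^ ((m - 2) / 2) → w ≠ 2 ^ (m - 1) + 2 ^ (m / 2) →
      w ≠ 2 ^ m → numwt C w = 0) :
    (numwt (dualCode C) 6 : ℚ) =
      (1 / 45) * 2 ^ (m - 4) * (2 ^ m - 4) ^ 2 * (2 ^ m - 1) := by
  classical
  obtain ⟨j, hj⟩ : ∃ j, m = 2 * j + 4 := by obtain ⟨k, hk⟩ := hmeven; exact ⟨k - 2, by omega⟩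
  set a : ℕ := 2 ^ (j + 1) with ha
  have hn : 2 ^ m = 4 * a ^ 2 := by rw [hj, ha]; ring
  have hw : 2 ^ (m - 1) = 2 * a ^ 2 := by rw [show m - 1 = 2 * j + 3 by omega, ha]; ring
  have hd1 : 2 ^ (m / 2) = 2 * a := by rw [show m / 2 = j + 2 by omega, ha]; ring
  have hd2 : 2 ^ ((m - 2) / 2) = a := by rw [show (m - 2) / 2 = j + 1 by omega]
  have hq2 : (2 : ℚ) ^ (m - 2) = a ^ 2 := by
    rw [show m - 2 = 2 * j + 2 by omega, ha]; push_cast; ring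
  have hq1 : (2 : ℚ) ^ (m + 1) = 8 * a ^ 2 := by rw [hj, ha]; push_cast; ring
  have hq4 : (2 : ℚ) ^ (m - 4) = a ^ 2 / 4 := by
    rw [show m - 4 = 2 * j by omega, ha]; push_cast; ring
  have hqn : (2 : ℚ) ^ m = 4 * a ^ 2 := by exact_mod_cast hn
  have hC : Fintype.card C = 32 * a ^ 4 := by
    rw [Module.card_eq_pow_finrank (K := ZMod 2), ZMod.card, hdim, hj, ha]; ring
  rw [hw, hd1, hd2] at h0
  rw [hw, hd1, hqn, hq2] at h1 h5
  rw [hw, hd2, hqn, hq1] at h2 h4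
  have h3' : (numwt C (2 * a ^ 2) : ℚ) = 2 * (4 * a ^ 2 - 1) * (a ^ 2 + 1) := by
    rw [← hw, h3]; push_cast [Nat.one_le_two_pow, hqn, hq2]; ring
  rw [hq4, hqn]
  refine numwt_dualCode_six_of_goldWeights C (Nat.le_self_pow j.succ_ne_zero 2) (by simp [hn]) hC
    (fun w hw => ?_) h1 h2 h3' h4 h5 (by rwa [← hn])
  simp only [List.mem_cons, List.not_mem_nil, or_false, not_or] at hw
  obtain ⟨e0, e1, e2, e3, e4, e5, e6⟩ := hw
  exact h0 w e0 e1 e2 e3 e4 e5 (by rwa [hn])
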